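/- The zero physical-weight cycle subgroup equals the centralizer of the finite-memory subgroup: P₀ = C(F₀). -/
import Mathlib


open scoped BigOperators

/-- The Pauli group on `j` qubits modulo its center, written additively:
an element `(a, b)` at each qubit corresponds to `X^a Z^b`. -/
abbrev Pauli (j : ℕ) := Fin j → (ZMod 2) × (ZMod 2)

/-- The standard symplectic form: two Pauli elements commute iff it vanishes. -/
def omega {j : ℕ} (v w : Pauli j) : ZMod 2 :=
  ∑ i, ((v i).1 * (w i).2 + (w i).1 * (v i).2)

/-- A quantum convolutional encoder: a symplectic automorphism taking
(memory `m`, ancilla `s = n - k`, information `k`) to (physical `n`, memory `m`). -/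
structure Encoder (m s k n : ℕ) where
  toEquiv : (Pauli m × Pauli s × Pauli k) ≃+ (Pauli n × Pauli m)
  symp : ∀ x y : Pauli m × Pauli s × Pauli k,
    omega (toEquiv x).1 (toEquiv y).1 + omega (toEquiv x).2 (toEquiv y).2
      = omega x.1 y.1 + omega x.2.1 y.2.1 + omega x.2.2 y.2.2

/-- `S ∈ {I, Z}^{⊗ s}`: the X-component vanishes. -/
def isIZ {s : ℕ} (S : Pauli s) : Prop := ∀ i, (S i).1 = 0

/-- Pauli `Z` on the `i`-th qubit, identity elsewhere. -/
def Zi {s : ℕ} (i : Fin s) : Pauli s := fun j => (0, if j = i then 1 else 0)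

/-- Pauli `X` on the `i`-th qubit, identity elsewhere. -/
def Xi {k : ℕ} (i : Fin k) : Pauli k := fun j => (if j = i then 1 else 0, 0)

/-- A standard path: at each step the ancilla input is in `{I,Z}^{⊗s}` and the
logical input is the identity. -/
def stdPath {m s k n : ℕ} (E : Encoder m s k n) (f : ℕ → Pauli m) : Prop :=
  ∀ t, ∃ (S : Pauli s) (P : Pauli n), isIZ S ∧ E.toEquiv (f t, S, 0) = (P, f (t + 1))

/-- A finite-memory state: some standard path from it reaches the identity memory state. -/
def finiteMemory {m s k n : ℕ} (E : Encoder m s k n) (M : Pauli m) : Prop :=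
  ∃ f : ℕ → Pauli m, stdPath E f ∧ f 0 = M ∧ ∃ t, f t = 0

/-- Membership in a zero physical-weight cycle. -/
def inZeroCycle {m s k n : ℕ} (E : Encoder m s k n) (M : Pauli m) : Prop :=
  ∃ (p : ℕ) (f : ℕ → Pauli m), 0 < p ∧ f 0 = M ∧ (∀ t, f (t + p) = f t) ∧
    ∀ t, ∃ (S : Pauli s) (L : Pauli k), isIZ S ∧ E.toEquiv (f t, S, L) = (0, f (t + 1))

/-- Non-catastrophic: every edge of every zero physical-weight cycle has
identity logical label. -/
def nonCatastrophic {m s k n : ℕ} (E : Encoder m s k n) : Prop :=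
  ∀ (p : ℕ) (f : ℕ → Pauli m) (S : ℕ → Pauli s) (L : ℕ → Pauli k),
    0 < p → (∀ t, f (t + p) = f t) →
    (∀ t, isIZ (S t) ∧ E.toEquiv (f t, S t, L t) = (0, f (t + 1))) →
    ∀ t, L t = 0

/-! ### Auxiliary material for the proof -/

section OmegaLemmas

lemma zmod2_add_self (a : ZMod 2) : a + a = 0 := CharTwo.add_self_eq_zero a

lemma pauli_add_self {j : ℕ} (v : Pauli j) : v + v = 0 := by
  funext i; have : (v + v) i = v i + v i := rfl
  rw [this]; ext <;> simp [zmod2_add_self]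

lemma omega_add_left {j : ℕ} (v v' w : Pauli j) :
    omega (v + v') w = omega v w + omega v' w := by
  unfold omega
  rw [← Finset.sum_add_distrib]
  refine Finset.sum_congr rfl fun i _ => ?_
  have h1 : ((v + v') i).1 = (v i).1 + (v' i).1 := rfl
  have h2 : ((v + v') i).2 = (v i).2 + (v' i).2 := rfl
  rw [h1, h2]; ring

lemma omega_add_right {j : ℕ} (v w w' : Pauli j) :
    omega v (w + w') = omega v w + omega v w' := by
  unfold omega
  rw [← Finset.sum_add_distrib]
  refine Finset.sum_congr rfl fun i _ => ?_
  have h1 : ((w + w') i).1 = (w i).1 + (w' i).1 := rfl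
  have h2 : ((w + w') i).2 = (w i).2 + (w' i).2 := rfl
  rw [h1, h2]; ring

lemma omega_zero_left {j : ℕ} (w : Pauli j) : omega 0 w = 0 := by
  unfold omega
  refine Finset.sum_eq_zero fun i _ => ?_
  have h1 : ((0 : Pauli j) i).1 = 0 := rfl
  have h2 : ((0 : Pauli j) i).2 = 0 := rfl
  rw [h1, h2]; ring

lemma omega_zero_right {j : ℕ} (w : Pauli j) : omega w 0 = 0 := by
  unfold omega
  refine Finset.sum_eq_zero fun i _ => ?_
  have h1 : ((0 : Pauli j) i).1 = 0 := rfl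
  have h2 : ((0 : Pauli j) i).2 = 0 := rfl
  rw [h1, h2]; ring

lemma omega_IZ {j : ℕ} {S S' : Pauli j} (h : isIZ S) (h' : isIZ S') : omega S S' = 0 := by
  unfold omega
  refine Finset.sum_eq_zero fun i _ => ?_
  rw [h i, h' i]; ring

lemma omega_Xi {j : ℕ} (v : Pauli j) (i : Fin j) : omega v (Xi i) = (v i).2 := by
  unfold omega Xi
  rw [Finset.sum_eq_single i]
  · simp
  · intro b _ hb; simp [if_neg hb]
  · simp

lemma omega_Zi {j : ℕ} (v : Pauli j) (i : Fin j) : omega v (Zi i) = (v i).1 := by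
  unfold omega Zi
  rw [Finset.sum_eq_single i]
  · simp
  · intro b _ hb; simp [if_neg hb]
  · simp

lemma omega_eq_zero_of_forall {j : ℕ} {v : Pauli j} (h : ∀ w, omega v w = 0) : v = 0 := by
  funext i
  have h1 := h (Zi i); have h2 := h (Xi i)
  rw [omega_Zi] at h1; rw [omega_Xi] at h2
  ext <;> simpa

lemma isIZ_of_omega {j : ℕ} {v : Pauli j} (h : ∀ S', isIZ S' → omega v S' = 0) : isIZ v := by
  intro i
  have h1 := h (Zi i) (fun t => rfl)
  rwa [omega_Zi] at h1

lemma pauli_decomp {j : ℕ} (w : Pauli j) :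
    w = ∑ i, ((w i).1 • Xi i + (w i).2 • Zi i) := by
  funext x
  rw [Finset.sum_apply]
  rw [Finset.sum_eq_single x]
  · show w x = (w x).1 • Xi x x + (w x).2 • Zi x x
    unfold Xi Zi
    simp [Prod.smul_mk, Prod.ext_iff]
  · intro b _ hb
    show (w b).1 • Xi b x + (w b).2 • Zi b x = 0
    unfold Xi Zi
    simp [if_neg (Ne.symm hb)]
  · simp

lemma omega_repr {j : ℕ} (l : Pauli j →ₗ[ZMod 2] ZMod 2) :
    ∃ v : Pauli j, ∀ w, omega v w = l w := by
  refine ⟨fun i => (l (Zi i), l (Xi i)), fun w => ?_⟩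
  conv_rhs => rw [pauli_decomp w]
  rw [map_sum]
  unfold omega
  refine Finset.sum_congr rfl fun i _ => ?_
  rw [map_add, map_smul, map_smul]
  show l (Zi i) * (w i).2 + (w i).1 * l (Xi i)
      = (w i).1 * l (Xi i) + (w i).2 * l (Zi i)
  ring

lemma exists_omega_vector {j : ℕ} (K : Submodule (ZMod 2) (Pauli j × ZMod 2))
    (h : ((0 : Pauli j), (1 : ZMod 2)) ∉ K) :
    ∃ v : Pauli j, ∀ x : Pauli j, ∀ r : ZMod 2, (x, r) ∈ K → omega v x = r := by
  set f : K →ₗ[ZMod 2] Pauli j := (LinearMap.fst (ZMod 2) (Pauli j) (ZMod 2)).comp K.subtype with hf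
  have hker : LinearMap.ker f = ⊥ := by
    rw [LinearMap.ker_eq_bot']
    rintro ⟨⟨x, r⟩, hm⟩ hfx
    have hx : x = 0 := hfx
    have hr : r = 0 := by
      by_contra hr
      have hall : ∀ y : ZMod 2, y ≠ 0 → y = 1 := by decide
      have hr1 : r = 1 := hall r hr
      rw [hx, hr1] at hm
      exact h hm
    apply Subtype.ext
    show (x, r) = (0 : Pauli j × ZMod 2)
    rw [hx, hr]
    rfl
  obtain ⟨g, hg⟩ := f.exists_leftInverse_of_injective hker
  set l : Pauli j →ₗ[ZMod 2] ZMod 2 :=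
    ((LinearMap.snd (ZMod 2) (Pauli j) (ZMod 2)).comp K.subtype).comp g with hl
  obtain ⟨v, hv⟩ := omega_repr l
  refine ⟨v, fun x r hm => ?_⟩
  have hgx : g x = ⟨(x, r), hm⟩ := by
    have := congrArg (fun φ => φ ⟨(x, r), hm⟩) hg
    exact this
  rw [hv x, hl]
  show ((K.subtype (g x)).2) = r
  rw [hgx]
  rfl

end OmegaLemmas

section RelStuff
variable {α : Type*}

def rcomp (R R' : Set (α × α)) : Set (α × α) :=
  {q | ∃ b, (q.1, b) ∈ R ∧ (b, q.2) ∈ R'}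

def rdiag : Set (α × α) := {q | q.1 = q.2}

def rpow (R : Set (α × α)) : ℕ → Set (α × α)
  | 0 => rdiag
  | p + 1 => rcomp R (rpow R p)

lemma rcomp_assoc (R S T : Set (α × α)) :
    rcomp (rcomp R S) T = rcomp R (rcomp S T) := by
  ext ⟨x, y⟩
  constructor
  · rintro ⟨b, ⟨c, h1, h2⟩, h3⟩
    exact ⟨c, h1, b, h2, h3⟩
  · rintro ⟨c, h1, b, h2, h3⟩
    exact ⟨b, ⟨c, h1, h2⟩, h3⟩

lemma rcomp_rdiag (R : Set (α × α)) : rcomp R rdiag = R := by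
  ext ⟨x, y⟩
  constructor
  · rintro ⟨b, h1, (h2 : b = y)⟩
    rwa [h2] at h1
  · intro h
    exact ⟨y, h, rfl⟩

lemma rpow_add (R : Set (α × α)) (a b : ℕ) :
    rpow R (a + b) = rcomp (rpow R a) (rpow R b) := by
  induction a with
  | zero =>
    have h0 : (0 : ℕ) + b = b := Nat.zero_add b
    rw [h0]
    ext ⟨x, y⟩
    constructor
    · intro h; exact ⟨x, rfl, h⟩
    · rintro ⟨c, (h1 : x = c), h2⟩; rwa [← h1] at h2
  | succ a ih =>
    have h1 : a + 1 + b = (a + b) + 1 := by omega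
    rw [h1]
    show rcomp R (rpow R (a + b)) = _
    rw [ih]
    rw [show rpow R (a + 1) = rcomp R (rpow R a) from rfl]
    rw [rcomp_assoc]

lemma rpow_zero_mem {R : Set (α × α)} [Zero α] (h0 : ((0 : α), (0 : α)) ∈ R) (p : ℕ) :
    ((0 : α), (0 : α)) ∈ rpow R p := by
  induction p with
  | zero => rfl
  | succ p ih => exact ⟨0, h0, ih⟩

lemma rpow_add_mem [Add α] {R : Set (α × α)}
    (hadd : ∀ q q' : α × α, q ∈ R → q' ∈ R → q + q' ∈ R) (p : ℕ) :
    ∀ q q' : α × α, q ∈ rpow R p → q' ∈ rpow R p → q + q' ∈ rpow R p := by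
  induction p with
  | zero =>
    rintro ⟨x, y⟩ ⟨x', y'⟩ (h : x = y) (h' : x' = y')
    show x + x' = y + y'
    rw [h, h']
  | succ p ih =>
    rintro ⟨x, y⟩ ⟨x', y'⟩ ⟨b, h1, h2⟩ ⟨b', h1', h2'⟩
    refine ⟨b + b', ?_, ?_⟩
    · exact hadd (x, b) (x', b') h1 h1'
    · exact ih (b, y) (b', y') h2 h2'

lemma rpow_total {R : Set (α × α)} (htot : ∀ x : α, ∃ y, (x, y) ∈ R) (p : ℕ) :
    ∀ x : α, ∃ y, (x, y) ∈ rpow R p := by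
  induction p with
  | zero => exact fun x => ⟨x, rfl⟩
  | succ p ih =>
    intro x
    obtain ⟨b, hb⟩ := htot x
    obtain ⟨y, hy⟩ := ih b
    exact ⟨y, b, hb, hy⟩

lemma exists_stable_pow [Finite α] (R : Set (α × α)) :
    ∃ p : ℕ, 0 < p ∧ rpow R (p + p) ⊆ rpow R p := by
  obtain ⟨a, b, hne, heq⟩ := Finite.exists_ne_map_eq_of_infinite (rpow R)
  wlog hab : a < b generalizing a b
  · exact this b a (Ne.symm hne) heq.symm (by omega)
  set d := b - a with hd
  have hdpos : 0 < d := by omega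
  have hbad : b = a + d := by omega
  have step1 : ∀ j : ℕ, rpow R (a + j) = rpow R (a + j + d) := by
    intro j
    induction j with
    | zero =>
      have h1 : a + 0 = a := by omega
      rw [h1, ← hbad]; exact heq
    | succ j ih =>
      have e1 : a + (j + 1) = (a + j) + 1 := by omega
      rw [e1]
      have e2 : a + j + 1 + d = (a + j + d) + 1 := by omega
      rw [e2]
      show rcomp R (rpow R (a + j)) = rcomp R (rpow R (a + j + d))
      rw [ih]
  have step1' : ∀ t : ℕ, a ≤ t → rpow R t = rpow R (t + d) := by
    intro t ht
    obtain ⟨j, rfl⟩ : ∃ j, t = a + j := ⟨t - a, by omega⟩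
    exact step1 j
  have step2 : ∀ (c t : ℕ), a ≤ t → rpow R t = rpow R (t + c * d) := by
    intro c
    induction c with
    | zero => intro t _; rw [show t + 0 * d = t by omega]
    | succ c ih =>
      intro t ht
      have := step1' (t + c * d) (by omega)
      rw [show t + (c + 1) * d = t + c * d + d by ring]
      rw [← this]
      exact ih t ht
  refine ⟨(a + 1) * d, by positivity, ?_⟩
  have := step2 (a + 1) ((a + 1) * d) (by nlinarith)
  rw [← this]

end RelStuff

namespace ZC
variable {m s k n : ℕ} (E : Encoder m s k n)

lemma isIZ_zero : isIZ (0 : Pauli s) := fun _ => rfl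

lemma isIZ_add {S S' : Pauli s} (h : isIZ S) (h' : isIZ S') : isIZ (S + S') := by
  intro i
  show (S i + S' i).1 = 0
  show (S i).1 + (S' i).1 = 0
  rw [h i, h' i, add_zero]

def Rs : Set (Pauli m × Pauli m) :=
  {q | ∃ S P, isIZ S ∧ E.toEquiv (q.1, S, 0) = (P, q.2)}

def Rz : Set (Pauli m × Pauli m) :=
  {q | ∃ S L, isIZ S ∧ E.toEquiv (q.1, S, L) = (0, q.2)}

lemma Rs_zero : ((0 : Pauli m), (0 : Pauli m)) ∈ Rs E := by
  refine ⟨0, 0, isIZ_zero, ?_⟩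
  show E.toEquiv 0 = 0
  exact E.toEquiv.map_zero

lemma Rs_add {q q' : Pauli m × Pauli m} (h : q ∈ Rs E) (h' : q' ∈ Rs E) :
    q + q' ∈ Rs E := by
  obtain ⟨S, P, hS, hE⟩ := h
  obtain ⟨S', P', hS', hE'⟩ := h'
  refine ⟨S + S', P + P', isIZ_add hS hS', ?_⟩
  have : ((q + q').1, S + S', (0 : Pauli k)) = (q.1, S, (0:Pauli k)) + (q'.1, S', 0) := by
    simp [Prod.ext_iff]
  rw [this, map_add, hE, hE']
  simp [Prod.ext_iff]

lemma Rs_total (M : Pauli m) : (M, (E.toEquiv (M, 0, 0)).2) ∈ Rs E :=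
  ⟨0, (E.toEquiv (M, 0, 0)).1, isIZ_zero, rfl⟩

lemma perp_Rs_subset_Rz {u w : Pauli m}
    (h : ∀ a b : Pauli m, (a, b) ∈ Rs E → omega u a + omega w b = 0) :
    (u, w) ∈ Rz E := by
  set x := E.toEquiv.symm ((0 : Pauli n), w) with hx
  have hEx : E.toEquiv x = (0, w) := E.toEquiv.apply_symm_apply _
  have key : ∀ (N : Pauli m) (S' : Pauli s), isIZ S' →
      omega u N + (omega x.1 N + omega x.2.1 S') = 0 := by
    intro N S' hS'
    have hsymp := E.symp x (N, S', 0)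
    rw [hEx] at hsymp
    simp only at hsymp
    rw [omega_zero_left, omega_zero_right, zero_add, add_zero] at hsymp
    have hmem : (N, (E.toEquiv (N, S', 0)).2) ∈ Rs E :=
      ⟨S', (E.toEquiv (N, S', 0)).1, hS', rfl⟩
    have := h N _ hmem
    rw [hsymp] at this
    exact this
  have hM : x.1 = u := by
    have h0 : ∀ N, omega (u + x.1) N = 0 := by
      intro N
      have := key N 0 (isIZ_zero)
      rw [omega_zero_right, add_zero, ← omega_add_left] at this
      exact this
    have := omega_eq_zero_of_forall h0
    have h2 : u + (u + x.1) = u + 0 := by rw [this]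
    rwa [← add_assoc, pauli_add_self, zero_add, add_zero] at h2
  have hS0 : isIZ x.2.1 := by
    refine isIZ_of_omega fun S' hS' => ?_
    have := key 0 S' hS'
    rw [omega_zero_right, omega_zero_right, zero_add, zero_add] at this
    exact this
  refine ⟨x.2.1, x.2.2, hS0, ?_⟩
  have hxe : (u, x.2.1, x.2.2) = x := by rw [← hM]
  rw [hxe, hEx]

end ZC

def Perp2 {j : ℕ} (R : Set (Pauli j × Pauli j)) : Set (Pauli j × Pauli j) :=
  {q | ∀ r ∈ R, omega q.1 r.1 + omega q.2 r.2 = 0}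

lemma zmod2_cases (c : ZMod 2) : c = 0 ∨ c = 1 := by revert c; decide

lemma perp_rpow {j : ℕ} (RS RZ : Set (Pauli j × Pauli j))
    (hS0 : ((0 : Pauli j), (0 : Pauli j)) ∈ RS)
    (hSadd : ∀ q q' : Pauli j × Pauli j, q ∈ RS → q' ∈ RS → q + q' ∈ RS)
    (hbase : Perp2 RS ⊆ RZ) :
    ∀ p : ℕ, Perp2 (rpow RS p) ⊆ rpow RZ p := by
  intro p
  induction p with
  | zero =>
    rintro ⟨u, w⟩ hp
    show u = w
    have hz : ∀ a : Pauli j, omega (u + w) a = 0 := by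
      intro a
      have := hp (a, a) rfl
      rw [← omega_add_left] at this
      exact this
    have huw := omega_eq_zero_of_forall hz
    have h2 : u + (u + w) = u + 0 := by rw [huw]
    rw [← add_assoc, pauli_add_self, zero_add, add_zero] at h2
    exact h2.symm
  | succ p ih =>
    rintro ⟨u, w⟩ hp
    set Kc : Set (Pauli j × ZMod 2) :=
      {q | ∃ a b c d : Pauli j, (a, b) ∈ RS ∧ (c, d) ∈ rpow RS p ∧
            q.1 = b + c ∧ q.2 = omega u a + omega w d} with hKc
    have hK0 : ((0 : Pauli j), (0 : ZMod 2)) ∈ Kc :=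
      ⟨0, 0, 0, 0, hS0, rpow_zero_mem hS0 p, by rw [add_zero],
        by rw [omega_zero_right, omega_zero_right, add_zero]⟩
    have hKadd : ∀ q q' : Pauli j × ZMod 2, q ∈ Kc → q' ∈ Kc → q + q' ∈ Kc := by
      rintro ⟨x, r⟩ ⟨x', r'⟩ ⟨a, b, c, d, h1, h2, h3, h4⟩ ⟨a', b', c', d', h1', h2', h3', h4'⟩
      refine ⟨a + a', b + b', c + c', d + d', hSadd _ _ h1 h1',
        rpow_add_mem hSadd p _ _ h2 h2', ?_, ?_⟩
      · show x + x' = (b + b') + (c + c')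
        have h3₀ : x = b + c := h3
        have h3₀' : x' = b' + c' := h3'
        rw [h3₀, h3₀']; module
      · show r + r' = omega u (a + a') + omega w (d + d')
        have h4₀ : r = omega u a + omega w d := h4
        have h4₀' : r' = omega u a' + omega w d' := h4'
        rw [h4₀, h4₀', omega_add_right, omega_add_right]; ring
    set K : Submodule (ZMod 2) (Pauli j × ZMod 2) :=
      { carrier := Kc
        add_mem' := fun {q q'} h h' => hKadd q q' h h'
        zero_mem' := hK0
        smul_mem' := by
          intro c x hx
          rcases zmod2_cases c with hc | hc
          · rw [hc, zero_smul]; exact hK0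
          · rw [hc, one_smul]; exact hx } with hK
    have hnot : ((0 : Pauli j), (1 : ZMod 2)) ∉ K := by
      rintro ⟨a, b, c, d, h1, h2, h3, h4⟩
      have hcb : c = b := by
        have h3' : (0 : Pauli j) = b + c := h3
        have : b + (b + c) = b + 0 := by rw [← h3']
        rwa [← add_assoc, pauli_add_self, zero_add, add_zero] at this
      rw [hcb] at h2
      have had : ((a, d) : Pauli j × Pauli j) ∈ rcomp RS (rpow RS p) := ⟨b, h1, h2⟩
      have := hp (a, d) had
      rw [← h4] at this
      exact one_ne_zero this
    obtain ⟨v, hv⟩ := exists_omega_vector K hnot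
    have huv : (u, v) ∈ Perp2 RS := by
      rintro ⟨a, b⟩ hab
      have hmem : ((b, omega u a) : Pauli j × ZMod 2) ∈ K :=
        ⟨a, b, 0, 0, hab, rpow_zero_mem hS0 p, by rw [add_zero],
          by rw [omega_zero_right, add_zero]⟩
      have := hv b (omega u a) hmem
      show omega u a + omega v b = 0
      rw [this]
      exact CharTwo.add_self_eq_zero _
    have hvw : (v, w) ∈ Perp2 (rpow RS p) := by
      rintro ⟨c, d⟩ hcd
      have hmem : ((c, omega w d) : Pauli j × ZMod 2) ∈ K :=
        ⟨0, 0, c, d, hS0, hcd, by rw [zero_add], by rw [omega_zero_right, zero_add]⟩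
      have := hv c (omega w d) hmem
      show omega v c + omega w d = 0
      rw [this]
      exact CharTwo.add_self_eq_zero _
    exact ⟨v, hbase huv, ih hvw⟩

namespace ZC
variable {m s k n : ℕ} (E : Encoder m s k n)

/-- deterministic continuation with trivial inputs -/
def step (M : Pauli m) : Pauli m := (E.toEquiv (M, 0, 0)).2

lemma rsPow_path (p : ℕ) :
    ∀ z w : Pauli m, (z, w) ∈ rpow (Rs E) p →
      ∃ f : ℕ → Pauli m, stdPath E f ∧ f 0 = z ∧ f p = w := by
  induction p with
  | zero =>
    rintro z w (hzw : z = w)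
    refine ⟨fun t => (step E)^[t] z, ?_, rfl, hzw ▸ rfl⟩
    intro t
    refine ⟨0, (E.toEquiv ((step E)^[t] z, 0, 0)).1, isIZ_zero, ?_⟩
    show E.toEquiv ((step E)^[t] z, 0, 0)
        = ((E.toEquiv ((step E)^[t] z, 0, 0)).1, (step E)^[t + 1] z)
    rw [Function.iterate_succ_apply']
    rfl
  | succ p ih =>
    rintro z w ⟨b, hzb, hbw⟩
    obtain ⟨g, hg, hg0, hgp⟩ := ih b w hbw
    refine ⟨fun t => Nat.rec z (fun t' _ => g t') t, ?_, rfl, hgp⟩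
    intro t
    cases t with
    | zero =>
      obtain ⟨S, P, hS, hE⟩ := hzb
      refine ⟨S, P, hS, ?_⟩
      show E.toEquiv (z, S, 0) = (P, g 0)
      rw [hg0]
      exact hE
    | succ t' =>
      obtain ⟨S, P, hS, hE⟩ := hg t'
      exact ⟨S, P, hS, hE⟩

lemma finiteMemory_of_rsPow {p : ℕ} {z : Pauli m} (h : (z, 0) ∈ rpow (Rs E) p) :
    finiteMemory E z := by
  obtain ⟨f, hf, hf0, hfp⟩ := rsPow_path E p z 0 h
  exact ⟨f, hf, hf0, p, hfp⟩

lemma rzPow_chain (p : ℕ) :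
    ∀ z w : Pauli m, (z, w) ∈ rpow (Rz E) p →
      ∃ c : ℕ → Pauli m, c 0 = z ∧ c p = w ∧ ∀ t, t < p → (c t, c (t + 1)) ∈ Rz E := by
  induction p with
  | zero =>
    rintro z w (hzw : z = w)
    exact ⟨fun _ => z, rfl, hzw ▸ rfl, fun t ht => absurd ht (Nat.not_lt_zero t)⟩
  | succ p ih =>
    rintro z w ⟨b, hzb, hbw⟩
    obtain ⟨c', hc0, hcp, hce⟩ := ih b w hbw
    refine ⟨fun t => Nat.rec z (fun t' _ => c' t') t, rfl, hcp, ?_⟩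
    intro t ht
    cases t with
    | zero =>
      show (z, c' 0) ∈ Rz E
      rw [hc0]
      exact hzb
    | succ t' =>
      exact hce t' (by omega)

lemma inZeroCycle_of_rzPow {p : ℕ} (hp : 0 < p) {M : Pauli m}
    (h : (M, M) ∈ rpow (Rz E) p) : inZeroCycle E M := by
  obtain ⟨c, hc0, hcp, hce⟩ := rzPow_chain E p M M h
  refine ⟨p, fun t => c (t % p), hp, ?_, ?_, ?_⟩
  · show c (0 % p) = M
    rw [Nat.zero_mod]; exact hc0
  · intro t
    show c ((t + p) % p) = c (t % p)
    rw [Nat.add_mod_right]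
  · intro t
    have hlt : t % p < p := Nat.mod_lt _ hp
    have hedge := hce (t % p) hlt
    have hnext : c ((t + 1) % p) = c (t % p + 1) := by
      rcases Nat.lt_or_ge (t % p + 1) p with hcase | hcase
      · have e1 : (t + 1) % p = (t % p + 1 % p) % p := Nat.add_mod t 1 p
        have e2 : 1 % p = 1 := Nat.mod_eq_of_lt (by omega)
        rw [e1, e2, Nat.mod_eq_of_lt hcase]
      · have heq : t % p + 1 = p := by omega
        have e1 : (t + 1) % p = (t % p + 1 % p) % p := Nat.add_mod t 1 p
        have e2 : 1 % p = 1 % p := rfl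
        have e3 : (t % p + 1 % p) % p = 0 := by
          rcases Nat.lt_or_ge 1 p with h1 | h1
          · rw [Nat.mod_eq_of_lt h1, heq, Nat.mod_self]
          · have hp1 : p = 1 := by omega
            subst hp1
            omega
        rw [e1, e3, heq, hcp, hc0]
    obtain ⟨S, L, hS, hE⟩ := hedge
    refine ⟨S, L, hS, ?_⟩
    show E.toEquiv (c (t % p), S, L) = (0, c ((t + 1) % p))
    rw [hnext]
    exact hE

/-- every element of `Δ_p` reaches 0 in `p` standard steps, given stability -/
lemma delta_reaches_zero {p : ℕ} (hstab : rpow (Rs E) (p + p) ⊆ rpow (Rs E) p)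
    {x y : Pauli m} (hxy : (x, y) ∈ rpow (Rs E) p) :
    (x + y, 0) ∈ rpow (Rs E) p := by
  have htot : ∀ M : Pauli m, ∃ M', (M, M') ∈ Rs E := fun M => ⟨_, Rs_total E M⟩
  obtain ⟨wv, hw⟩ := rpow_total htot p y
  have hxw : (x, wv) ∈ rpow (Rs E) p := by
    apply hstab
    rw [rpow_add]
    exact ⟨y, hxy, hw⟩
  have hadd := rpow_add_mem (fun q q' => Rs_add E) p
  have h1 : ((x + x : Pauli m), y + wv) ∈ rpow (Rs E) p := hadd (x, y) (x, wv) hxy hxw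
  rw [pauli_add_self] at h1
  have h2 : ((y + 0 : Pauli m), wv + (y + wv)) ∈ rpow (Rs E) p := hadd (y, wv) (0, y + wv) hw h1
  have e1 : (y + 0 : Pauli m) = y := add_zero y
  have e2 : wv + (y + wv) = y := by
    rw [add_comm y wv, ← add_assoc, pauli_add_self, zero_add]
  rw [e1, e2] at h2
  have h3 : ((x + y : Pauli m), y + y) ∈ rpow (Rs E) p := hadd (x, y) (y, y) hxy h2
  rwa [pauli_add_self] at h3

/-- Direction 1: zero-cycle states are orthogonal to finite-memory states -/
lemma dir1 {M N : Pauli m} (hM : inZeroCycle E M) (hN : finiteMemory E N) :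
    omega M N = 0 := by
  obtain ⟨p, f, hp, hf0, hper, hedge⟩ := hM
  obtain ⟨g, hg, hg0, T, hgT⟩ := hN
  have const : ∀ t, omega (f t) (g t) = omega M N := by
    intro t
    induction t with
    | zero => rw [hf0, hg0]
    | succ t ih =>
      obtain ⟨S, L, hS, hE⟩ := hedge t
      obtain ⟨S', P', hS', hE'⟩ := hg t
      have hsymp := E.symp (f t, S, L) (g t, S', 0)
      rw [hE, hE'] at hsymp
      simp only at hsymp
      rw [omega_zero_left, omega_IZ hS hS', omega_zero_right, zero_add, add_zero,
        add_zero] at hsymp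
      rw [hsymp, ih]
  have := const T
  rw [hgT, omega_zero_right] at this
  exact this.symm

end ZC

theorem zero_cycle_subgroup_eq_centralizer {m s k n : ℕ} (E : Encoder m s k n) :
    {M : Pauli m | inZeroCycle E M}
      = {M : Pauli m | ∀ N : Pauli m, finiteMemory E N → omega M N = 0} := by
  ext M
  simp only [Set.mem_setOf_eq]
  constructor
  · intro hM N hN
    exact ZC.dir1 E hM hN
  · intro hM
    obtain ⟨p, hp, hstab⟩ := exists_stable_pow (ZC.Rs E)
    have hperp : (M, M) ∈ Perp2 (rpow (ZC.Rs E) p) := by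
      rintro ⟨a, b⟩ hab
      have hfm : finiteMemory E (a + b) :=
        ZC.finiteMemory_of_rsPow E (ZC.delta_reaches_zero E hstab hab)
      have := hM (a + b) hfm
      rw [omega_add_right] at this
      exact this
    have hz : (M, M) ∈ rpow (ZC.Rz E) p :=
      perp_rpow (ZC.Rs E) (ZC.Rz E) (ZC.Rs_zero E) (fun q q' => ZC.Rs_add E)
        (fun q hq => ZC.perp_Rs_subset_Rz E (fun a b hab => hq (a, b) hab)) p hperp
    exact ZC.inZeroCycle_of_rzPow E hp hz
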